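/- arXiv:2411.08828 — 3 statements merged into one kernel-verified Lean document; each statement's English description precedes it below -/
import Mathlib

section
/- Let a, b, x be complex numbers with b not a nonpositive integer. Then the confluent hypergeometric function satisfies the differential recursion relation (d/dx − 1) ₁F₁(a;b;x) = ((a − b)/b) ₁F₁(a;b+1;x), i.e. the derivative of ₁F₁(a;b;·) at x minus ₁F₁(a;b;x) equals ((a−b)/b)·₁F₁(a;b+1;x). -/
open Complex

/-- Pochhammer symbol `(q)_n = q (q+1) ⋯ (q+n-1)`. -/
noncomputable def poch (q : ℂ) (n : ℕ) : ℂ := (ascPochhammer ℂ n).eval q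

/-- Confluent hypergeometric function `₁F₁(a; b; x) = ∑ₛ (a)ₛ xˢ / (s! (b)ₛ)`. -/
noncomputable def oneF1 (a b x : ℂ) : ℂ :=
  ∑' s : ℕ, poch a s * x ^ s / ((s.factorial : ℂ) * poch b s)

lemma poch_zero (q : ℂ) : poch q 0 = 1 := by simp [poch]

lemma poch_succ (q : ℂ) (n : ℕ) : poch q (n + 1) = poch q n * (q + n) := by
  simp [poch, ascPochhammer_succ_eval]

lemma poch_ne_zero {b : ℂ} (hb : ∀ n : ℕ, b ≠ -(n : ℂ)) (n : ℕ) : poch b n ≠ 0 := by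
  induction n with
  | zero => simp [poch_zero]
  | succ k ih =>
    rw [poch_succ]
    refine mul_ne_zero ih ?_
    intro h
    exact hb k (by linear_combination h)

lemma poch_shift (b : ℂ) (n : ℕ) : poch b n * (b + n) = b * poch (b + 1) n := by
  induction n with
  | zero => simp [poch_zero]
  | succ k ih =>
    rw [poch_succ, poch_succ]
    push_cast
    linear_combination (b + k + 1) * ih

/-- Coefficient of the ₁F₁ series. -/
noncomputable def hgc (a b : ℂ) (n : ℕ) : ℂ := poch a n / ((n.factorial : ℂ) * poch b n)

lemma hb_add_ne {b : ℂ} (hb : ∀ n : ℕ, b ≠ -(n : ℂ)) (n : ℕ) : b + n ≠ 0 := by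
  intro h; exact hb n (by linear_combination h)

lemma hb_succ {b : ℂ} (hb : ∀ n : ℕ, b ≠ -(n : ℂ)) : ∀ n : ℕ, b + 1 ≠ -(n : ℂ) := by
  intro n h
  exact hb (n + 1) (by push_cast; linear_combination h)

lemma hgc_succ (a : ℂ) {b : ℂ} (hb : ∀ n : ℕ, b ≠ -(n : ℂ)) (n : ℕ) :
    hgc a b (n + 1) = hgc a b n * ((a + n) / (((n : ℂ) + 1) * (b + n))) := by
  rw [hgc, hgc, poch_succ, poch_succ, Nat.factorial_succ, div_mul_div_comm]
  congr 1
  push_cast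
  ring

lemma hgc_key (a : ℂ) {b : ℂ} (hb : ∀ n : ℕ, b ≠ -(n : ℂ)) (n : ℕ) :
    ((n : ℂ) + 1) * hgc a b (n + 1) - hgc a b n = ((a - b) / b) * hgc a (b + 1) n := by
  have h1 : ((n.factorial : ℂ)) ≠ 0 := Nat.cast_ne_zero.mpr n.factorial_ne_zero
  have h2 := poch_ne_zero hb n
  have h3 := hb_add_ne hb n
  have h2' := poch_ne_zero (hb_succ hb) n
  have hb0 : b ≠ 0 := by intro h; exact hb 0 (by simpa using h)
  have h4 : ((n : ℂ) + 1) ≠ 0 := Nat.cast_add_one_ne_zero n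
  have hshift := poch_shift b n
  have hrep : poch (b + 1) n = poch b n * (b + n) / b := by
    rw [eq_div_iff hb0]; linear_combination -hshift
  rw [hgc_succ a hb n, hgc, hgc, hrep]
  field_simp
  ring

lemma hgc_norm_succ (a : ℂ) {b : ℂ} (hb : ∀ n : ℕ, b ≠ -(n : ℂ)) (n : ℕ) :
    ‖hgc a b (n + 1)‖ = ‖hgc a b n‖ * (‖a + n‖ / (((n : ℝ) + 1) * ‖b + n‖)) := by
  rw [hgc_succ a hb n, norm_mul, norm_div, norm_mul]
  congr 3
  have : ((n : ℂ) + 1) = ((n + 1 : ℕ) : ℂ) := by push_cast; ring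
  rw [this, Complex.norm_natCast]
  push_cast; ring

/-- Summability of the dominating series. -/
lemma summable_dom (a : ℂ) {b : ℂ} (hb : ∀ n : ℕ, b ≠ -(n : ℂ)) {R : ℝ} (hR : 1 ≤ R) :
    Summable (fun n : ℕ => ‖hgc a b n‖ * ((n : ℝ) + 1) * R ^ n) := by
  have hR0 : (0:ℝ) < R := lt_of_lt_of_le one_pos hR
  set u : ℕ → ℝ := fun n => ‖hgc a b n‖ * ((n : ℝ) + 1) * R ^ n with hu
  have hupos : ∀ n, 0 ≤ u n := by
    intro n; positivity
  refine summable_of_ratio_norm_eventually_le (r := 1/2) (by norm_num) ?_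
  have hN : ∀ᶠ n : ℕ in Filter.atTop,
      (⌈‖a‖ + 2*‖b‖ + 32*R + 2⌉₊ : ℕ) ≤ n := Filter.eventually_ge_atTop _
  filter_upwards [hN] with n hn
  rw [Real.norm_of_nonneg (hupos _), Real.norm_of_nonneg (hupos _)]
  have hceil : (‖a‖ + 2*‖b‖ + 32*R + 2 : ℝ) ≤ (n : ℕ) := le_trans (Nat.le_ceil _) (by exact_mod_cast hn)
  have hA : ‖a‖ ≤ (n:ℝ) := by
    have h1 : (0:ℝ) ≤ 2*‖b‖ := by positivity
    have h2 : (0:ℝ) ≤ 32*R := by positivity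
    linarith
  have hB : 2*‖b‖ ≤ (n:ℝ) := by
    have h1 : (0:ℝ) ≤ ‖a‖ := norm_nonneg _
    have h2 : (0:ℝ) ≤ 32*R := by positivity
    linarith
  have hRn : 32*R ≤ (n:ℝ) := by
    have h1 : (0:ℝ) ≤ ‖a‖ := norm_nonneg _
    have h2 : (0:ℝ) ≤ 2*‖b‖ := by positivity
    linarith
  have h2n : (2:ℝ) ≤ (n:ℝ) := by
    have h1 : (0:ℝ) ≤ ‖a‖ := norm_nonneg _
    have h2 : (0:ℝ) ≤ 2*‖b‖ := by positivity
    have h3 : (0:ℝ) ≤ 32*R := by positivity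
    linarith
  have hβpos : (0:ℝ) < ‖b + n‖ := norm_pos_iff.mpr (hb_add_ne hb n)
  have hα : ‖a + (n:ℂ)‖ ≤ (n:ℝ) + ‖a‖ := by
    calc ‖a + (n:ℂ)‖ ≤ ‖a‖ + ‖(n:ℂ)‖ := norm_add_le _ _
    _ = (n:ℝ) + ‖a‖ := by rw [Complex.norm_natCast]; ring
  have hβ : (n:ℝ) - ‖b‖ ≤ ‖b + n‖ := by
    have : ‖(n:ℂ)‖ ≤ ‖b + n‖ + ‖b‖ := by
      calc ‖(n:ℂ)‖ = ‖(b + n) + (-b)‖ := by ring_nf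
      _ ≤ ‖b + n‖ + ‖-b‖ := norm_add_le _ _
      _ = ‖b + n‖ + ‖b‖ := by rw [norm_neg]
    rw [Complex.norm_natCast] at this
    linarith
  have hn0 : (0:ℝ) ≤ (n:ℝ) := Nat.cast_nonneg n
  have l1 : ‖a + (n:ℂ)‖ ≤ 2*(n:ℝ) := by linarith
  have l2 : (n:ℝ)+2 ≤ 2*(n:ℝ) := by linarith
  have l3 : (n:ℝ)/2 ≤ ‖b + (n:ℂ)‖ := by linarith
  have m1 : ‖a + (n:ℂ)‖*((n:ℝ)+2) ≤ 4*(n:ℝ)^2 := by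
    nlinarith [norm_nonneg (a + (n:ℂ))]
  have m2 : ‖a + (n:ℂ)‖*((n:ℝ)+2)*R*2 ≤ 8*(n:ℝ)^2*R := by nlinarith [norm_nonneg (a + (n:ℂ))]
  have m3 : 8*(n:ℝ)^2*R ≤ (n:ℝ)^3/4 := by
    nlinarith [mul_le_mul_of_nonneg_left hRn (show (0:ℝ) ≤ (n:ℝ)^2/4 by positivity)]
  have m4 : (n:ℝ)^3/4 ≤ ((n:ℝ)+1)^2 * ‖b + n‖ := by
    have hm : (n:ℝ)^2*((n:ℝ)/2) ≤ ((n:ℝ)+1)^2 * ‖b + n‖ :=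
      mul_le_mul (by nlinarith) l3 (by positivity) (by positivity)
    nlinarith [pow_nonneg hn0 3]
  have key : ‖a + (n:ℂ)‖ * ((n:ℝ) + 2) * R * 2 ≤ ((n:ℝ) + 1)^2 * ‖b + n‖ := by
    linarith
  have key2 : ‖a + (n:ℂ)‖ / (((n:ℝ) + 1) * ‖b + n‖) * ((n:ℝ) + 2) * R ≤ 1/2 * ((n:ℝ) + 1) := by
    rw [div_mul_eq_mul_div, div_mul_eq_mul_div, div_le_iff₀ (by positivity)]
    nlinarith [key]
  have hstep := mul_le_mul_of_nonneg_left key2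
    (show (0:ℝ) ≤ ‖hgc a b n‖ * R ^ n by positivity)
  calc u (n + 1) = ‖hgc a b n‖ * R ^ n *
        (‖a + (n:ℂ)‖ / (((n:ℝ) + 1) * ‖b + n‖) * ((n:ℝ) + 2) * R) := by
        rw [hu]; simp only []
        rw [hgc_norm_succ a hb n]
        push_cast
        ring
    _ ≤ ‖hgc a b n‖ * R ^ n * (1/2 * ((n:ℝ) + 1)) := hstep
    _ = 1/2 * u n := by rw [hu]; ring

theorem stmt0 (a b x : ℂ) (hb : ∀ n : ℕ, b ≠ -(n : ℂ)) :
    deriv (fun t => oneF1 a b t) x - oneF1 a b x = ((a - b) / b) * oneF1 a (b + 1) x := by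
  set R : ℝ := ‖x‖ + 1 with hRdef
  have hR1 : (1:ℝ) ≤ R := by rw [hRdef]; linarith [norm_nonneg x]
  have hR0 : (0:ℝ) < R := lt_of_lt_of_le one_pos hR1
  set c : ℕ → ℂ := fun n => hgc a b n with hc
  set u : ℕ → ℝ := fun n => ‖c n‖ * ((n : ℝ) + 1) * R ^ n with hudef
  have hu : Summable u := summable_dom a hb hR1
  -- the norm bound for derivative terms on the ball
  have hbound : ∀ (n : ℕ) (t : ℂ), ‖t‖ ≤ R → ‖c n * ((n:ℂ) * t ^ (n - 1))‖ ≤ u n := by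
    intro n t ht
    rw [norm_mul, norm_mul, Complex.norm_natCast, norm_pow]
    have h1 : ‖t‖ ^ (n - 1) ≤ R ^ (n - 1) := pow_le_pow_left₀ (norm_nonneg t) ht _
    have h2 : R ^ (n-1) ≤ R ^ n := pow_le_pow_right₀ hR1 (Nat.sub_le n 1)
    have h3 : (n:ℝ) * ‖t‖ ^ (n-1) ≤ ((n:ℝ) + 1) * R ^ n := by
      have : (n:ℝ) * ‖t‖ ^ (n-1) ≤ (n:ℝ) * R ^ n := by
        apply mul_le_mul_of_nonneg_left (le_trans h1 h2) (Nat.cast_nonneg n)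
      have h4 : (n:ℝ) * R ^ n ≤ ((n:ℝ)+1) * R ^ n := by
        apply mul_le_mul_of_nonneg_right (by linarith) (by positivity)
      linarith
    calc ‖c n‖ * ((n:ℝ) * ‖t‖ ^ (n-1)) ≤ ‖c n‖ * (((n:ℝ)+1) * R ^ n) :=
          mul_le_mul_of_nonneg_left h3 (norm_nonneg _)
      _ = u n := by rw [hudef]; ring
  -- pointwise bound for the series itself
  have hbound0 : ∀ (n : ℕ), ‖c n * x ^ n‖ ≤ u n := by
    intro n
    rw [norm_mul, norm_pow]
    have h1 : ‖x‖ ^ n ≤ R ^ n := pow_le_pow_left₀ (norm_nonneg x) (by simp [hRdef]) _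
    calc ‖c n‖ * ‖x‖ ^ n ≤ ‖c n‖ * (((n:ℝ)+1) * R ^ n) := by
          apply mul_le_mul_of_nonneg_left ?_ (norm_nonneg _)
          have : (1:ℝ) * R ^ n ≤ ((n:ℝ)+1) * R ^ n := by
            apply mul_le_mul_of_nonneg_right ?_ (by positivity)
            have := Nat.cast_nonneg (α := ℝ) n
            linarith
          calc ‖x‖ ^ n ≤ R ^ n := h1
            _ = 1 * R ^ n := by ring
            _ ≤ ((n:ℝ)+1) * R ^ n := this
      _ = u n := by rw [hudef]; ring
  have hF : (fun t : ℂ => oneF1 a b t) = fun t => ∑' n : ℕ, c n * t ^ n := by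
    funext t
    refine tsum_congr fun s => ?_
    rw [hc]; simp only [hgc, oneF1]
    rw [mul_div_right_comm]
  have hball : x ∈ Metric.ball (0:ℂ) R := by
    simp [hRdef, Metric.mem_ball, dist_eq_norm]
  have hderiv : HasDerivAt (fun t : ℂ => ∑' n : ℕ, c n * t ^ n)
      (∑' n : ℕ, c n * ((n:ℂ) * x ^ (n - 1))) x := by
    apply hasDerivAt_tsum_of_isPreconnected hu Metric.isOpen_ball
      ((convex_ball (0:ℂ) R).isPreconnected)
      (g := fun n t => c n * t ^ n) (g' := fun n t => c n * ((n:ℂ) * t ^ (n - 1)))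
      (y₀ := 0)
    · intro n t ht
      exact (hasDerivAt_pow n t).const_mul (c n)
    · intro n t ht
      exact hbound n t (by simpa [dist_eq_norm] using (Metric.mem_ball.mp ht).le)
    · simp [Metric.mem_ball, hR0]
    · apply summable_of_ne_finset_zero (s := ({0} : Finset ℕ))
      intro n hn
      simp only [Finset.mem_singleton] at hn
      rw [zero_pow hn, mul_zero]
    · exact hball
  have hSd : Summable (fun n : ℕ => c n * ((n:ℂ) * x ^ (n - 1))) :=
    Summable.of_norm_bounded hu (fun n => hbound n x (by simp [hRdef]))
  have hSc : Summable (fun n : ℕ => c n * x ^ n) :=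
    Summable.of_norm_bounded hu hbound0
  have hS1 : Summable (fun n : ℕ => c (n+1) * (((n:ℂ)+1) * x ^ n)) := by
    have := (summable_nat_add_iff 1).mpr hSd
    refine this.congr fun n => ?_
    push_cast
    simp
  rw [hF, hderiv.deriv]
  have hshift : (∑' n : ℕ, c n * ((n:ℂ) * x ^ (n - 1)))
      = ∑' n : ℕ, c (n+1) * (((n:ℂ)+1) * x ^ n) := by
    rw [Summable.tsum_eq_zero_add hSd]
    simp only [Nat.cast_zero, zero_mul, mul_zero, zero_add]
    refine tsum_congr fun n => ?_
    push_cast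
    simp
  rw [hshift]
  have hsub : (∑' n : ℕ, c (n+1) * (((n:ℂ)+1) * x ^ n)) - ∑' n : ℕ, c n * x ^ n
      = ∑' n : ℕ, (c (n+1) * (((n:ℂ)+1) * x ^ n) - c n * x ^ n) :=
    (Summable.tsum_sub hS1 hSc).symm
  have hOx : oneF1 a b x = ∑' n : ℕ, c n * x ^ n := congrFun hF x
  rw [hOx, hsub]
  have : ∀ n : ℕ, c (n+1) * (((n:ℂ)+1) * x ^ n) - c n * x ^ n
      = ((a - b) / b) * (hgc a (b+1) n * x ^ n) := by
    intro n
    have hk := hgc_key a hb n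
    rw [hc]
    linear_combination x ^ n * hk
  rw [tsum_congr this, tsum_mul_left]
  congr 1
  refine tsum_congr fun s => ?_
  simp only [hgc, oneF1]
  rw [mul_div_right_comm]
end

section
/- Let a, b, c, x, y be complex numbers with b and c not nonpositive integers. Then x·∂Ψ₂/∂x(a;b,c;x,y) + y·∂Ψ₂/∂y(a;b,c;x,y) + a·Ψ₂(a;b,c;x,y) = a·Ψ₂(a+1;b,c;x,y), where ∂Ψ₂/∂x and ∂Ψ₂/∂y denote the partial derivatives of Ψ₂(a;b,c;·,·) in its first and second variable. -/
open Complex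

/-- Humbert function `Ψ₂(a; b, c; x, y) = ∑ₘ,ₙ (a)ₘ₊ₙ xᵐ yⁿ / (m! n! (b)ₘ (c)ₙ)`. -/
noncomputable def psi2 (a b c x y : ℂ) : ℂ :=
  ∑' p : ℕ × ℕ, poch a (p.1 + p.2) * x ^ p.1 * y ^ p.2 /
    ((p.1.factorial : ℂ) * (p.2.factorial : ℂ) * poch b p.1 * poch c p.2)

lemma poch_succ_left (q : ℂ) (n : ℕ) : poch q (n + 1) = q * poch (q + 1) n := by
  simp [poch, ascPochhammer_succ_left, Polynomial.eval_comp]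

lemma poch_mul_add (q : ℂ) (n : ℕ) : poch q n * (q + n) = q * poch (q + 1) n := by
  rw [← poch_succ, poch_succ_left]

lemma poch_norm_le (q : ℂ) (n : ℕ) : ‖poch q n‖ ≤ (‖q‖ + 1) ^ n * n.factorial := by
  induction n with
  | zero => simp [poch_zero]
  | succ k ih =>
    rw [poch_succ, norm_mul]
    have h1 : ‖q + k‖ ≤ (‖q‖ + 1) * (k + 1) := by
      calc ‖q + k‖ ≤ ‖q‖ + ‖(k : ℂ)‖ := norm_add_le _ _
        _ = ‖q‖ + k := by rw [Complex.norm_natCast]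
        _ ≤ (‖q‖ + 1) * (k + 1) := by nlinarith [norm_nonneg q]
    calc ‖poch q k‖ * ‖q + k‖ ≤ ((‖q‖ + 1) ^ k * k.factorial) * ((‖q‖ + 1) * (k + 1)) := by
          apply mul_le_mul ih h1 (norm_nonneg _)
          positivity
      _ = (‖q‖ + 1) ^ (k + 1) * (k + 1).factorial := by
          rw [Nat.factorial_succ]; push_cast; ring

lemma factor_lb (b : ℂ) (hb : ∀ n : ℕ, b ≠ -(n : ℂ)) :
    ∃ r : ℝ, 0 < r ∧ ∀ j : ℕ, r * (j + 1) ≤ ‖b + j‖ := by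
  set N : ℕ := ⌊2 * ‖b‖⌋₊ + 1 with hNdef
  have hN : 2 * ‖b‖ < N := by
    have := Nat.lt_floor_add_one (2 * ‖b‖)
    rw [hNdef]; push_cast; linarith
  have hpos : ∀ j : ℕ, 0 < ‖b + j‖ := by
    intro j
    rw [norm_pos_iff]
    intro h
    exact hb j (by linear_combination h)
  have hne : (Finset.range N).Nonempty := ⟨0, by simp [hNdef]⟩
  set δ : ℝ := (Finset.range N).inf' hne (fun j => ‖b + j‖ / (j + 1)) with hδ
  refine ⟨min (1/4) δ, ?_, ?_⟩
  · apply lt_min (by norm_num)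
    rw [hδ, Finset.lt_inf'_iff]
    intro j _
    exact div_pos (hpos j) (by positivity)
  · intro j
    rcases lt_or_ge j N with hj | hj
    · have h1 : δ ≤ ‖b + j‖ / (j + 1) :=
        Finset.inf'_le _ (Finset.mem_range.mpr hj)
      have h2 : min (1/4) δ * (j + 1) ≤ (‖b + j‖ / (j + 1)) * (j + 1) := by
        apply mul_le_mul_of_nonneg_right (le_trans (min_le_right _ _) h1)
        positivity
      calc min (1/4) δ * (j + 1) ≤ (‖b + j‖ / (j + 1)) * (j + 1) := h2
        _ = ‖b + j‖ := by field_simp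
    · have hj1 : (1:ℝ) ≤ j := by
        have : 1 ≤ N := Nat.succ_le_succ (Nat.zero_le _)
        exact_mod_cast le_trans this hj
      have hjb : 2 * ‖b‖ < j := lt_of_lt_of_le hN (by exact_mod_cast hj)
      have h3 : (j : ℝ) - ‖b‖ ≤ ‖b + j‖ := by
        have := norm_sub_norm_le ((j : ℂ)) (-b)
        rw [norm_neg, sub_neg_eq_add, add_comm, Complex.norm_natCast] at this
        exact this
      calc min (1/4) δ * (j + 1) ≤ (1/4) * (j + 1) := by
            apply mul_le_mul_of_nonneg_right (min_le_left _ _) (by positivity)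
        _ ≤ (j : ℝ) - ‖b‖ := by linarith
        _ ≤ ‖b + j‖ := h3

lemma poch_lb (b : ℂ) (hb : ∀ n : ℕ, b ≠ -(n : ℂ)) :
    ∃ r : ℝ, 0 < r ∧ ∀ m : ℕ, r ^ m * m.factorial ≤ ‖poch b m‖ := by
  obtain ⟨r, hr, h⟩ := factor_lb b hb
  refine ⟨r, hr, ?_⟩
  intro m
  induction m with
  | zero => simp [poch_zero]
  | succ k ih =>
    rw [poch_succ, norm_mul]
    calc r ^ (k+1) * (k+1).factorial = (r ^ k * k.factorial) * (r * (k + 1)) := by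
          rw [Nat.factorial_succ]; push_cast; ring
      _ ≤ ‖poch b k‖ * ‖b + k‖ := by
          apply mul_le_mul ih (h k) (by positivity) (norm_nonneg _)

lemma nat_key (m n : ℕ) :
    (m + 1) * (n + 1) * (m + n).factorial ≤ 4 ^ m * 4 ^ n * (m.factorial * n.factorial) := by
  have h3 : (m + n).factorial ≤ 2 ^ (m + n) * (m.factorial * n.factorial) := by
    have hc : (m + n).choose m ≤ 2 ^ (m + n) := by
      calc (m + n).choose m ≤ ∑ i ∈ Finset.range (m + n + 1), (m + n).choose i :=
            Finset.single_le_sum (fun i _ => Nat.zero_le _)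
              (Finset.mem_range.mpr (by omega))
        _ = 2 ^ (m + n) := Nat.sum_range_choose _
    calc (m + n).factorial = (m + n).choose m * m.factorial * n.factorial := by
          rw [← Nat.add_choose_mul_factorial_mul_factorial m n, Nat.choose_symm_add]
      _ ≤ 2 ^ (m + n) * m.factorial * n.factorial := by
          exact Nat.mul_le_mul_right _ (Nat.mul_le_mul_right _ hc)
      _ = 2 ^ (m + n) * (m.factorial * n.factorial) := by ring
  have h1 : m + 1 ≤ 2 ^ m := Nat.lt_two_pow_self (n := m)
  have h2 : n + 1 ≤ 2 ^ n := Nat.lt_two_pow_self (n := n)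
  calc (m + 1) * (n + 1) * (m + n).factorial
      ≤ 2 ^ m * 2 ^ n * (2 ^ (m + n) * (m.factorial * n.factorial)) := by
        exact Nat.mul_le_mul (Nat.mul_le_mul h1 h2) h3
    _ = 4 ^ m * 4 ^ n * (m.factorial * n.factorial) := by
        rw [pow_add]
        ring_nf
        rw [show (4:ℕ) = 2 * 2 by norm_num]
        rw [mul_pow, mul_pow]
        ring

set_option maxHeartbeats 2000000 in
lemma summable_master (a b c : ℂ) (hb : ∀ n : ℕ, b ≠ -(n : ℂ)) (hc : ∀ n : ℕ, c ≠ -(n : ℂ))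
    (X Y : ℝ) (hX : 0 ≤ X) (hY : 0 ≤ Y) :
    Summable (fun p : ℕ × ℕ => ((p.1 : ℝ) + 1) * ((p.2 : ℝ) + 1) * ‖poch a (p.1 + p.2)‖ *
      X ^ p.1 * Y ^ p.2 /
      ((p.1.factorial : ℝ) * (p.2.factorial : ℝ) * ‖poch b p.1‖ * ‖poch c p.2‖)) := by
  obtain ⟨rb, hrb, hb'⟩ := poch_lb b hb
  obtain ⟨rc, hrc, hc'⟩ := poch_lb c hc
  set A : ℝ := ‖a‖ + 1 with hA
  have hA0 : 0 < A := by positivity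
  have hbpos : ∀ m : ℕ, 0 < ‖poch b m‖ := fun m =>
    lt_of_lt_of_le (by positivity) (hb' m)
  have hcpos : ∀ m : ℕ, 0 < ‖poch c m‖ := fun m =>
    lt_of_lt_of_le (by positivity) (hc' m)
  have hsum : Summable (fun p : ℕ × ℕ =>
      ((4 * A * X / rb) ^ p.1 / p.1.factorial) * ((4 * A * Y / rc) ^ p.2 / p.2.factorial)) :=
    Summable.mul_of_nonneg (Real.summable_pow_div_factorial _)
      (Real.summable_pow_div_factorial _)
      (fun m => by positivity) (fun n => by positivity)
  apply hsum.of_nonneg_of_le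
  · intro p
    have := hbpos p.1
    have := hcpos p.2
    positivity
  · rintro ⟨m, n⟩
    simp only
    have hfm : (0:ℝ) < m.factorial := by exact_mod_cast Nat.factorial_pos m
    have hfn : (0:ℝ) < n.factorial := by exact_mod_cast Nat.factorial_pos n
    calc ((m : ℝ) + 1) * ((n : ℝ) + 1) * ‖poch a (m + n)‖ * X ^ m * Y ^ n /
          ((m.factorial : ℝ) * (n.factorial : ℝ) * ‖poch b m‖ * ‖poch c n‖)
        ≤ ((m : ℝ) + 1) * ((n : ℝ) + 1) * (A ^ (m + n) * (m + n).factorial) * X ^ m * Y ^ n /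
          ((m.factorial : ℝ) * (n.factorial : ℝ) * (rb ^ m * m.factorial) * (rc ^ n * n.factorial)) := by
          gcongr <;>
            first
              | positivity
              | exact poch_norm_le a (m + n)
              | exact hb' m
              | exact hc' n
      _ = (((m : ℝ) + 1) * ((n : ℝ) + 1) * ((m + n).factorial : ℝ)) *
          (A ^ (m + n) * X ^ m * Y ^ n /
            ((m.factorial : ℝ) * (n.factorial : ℝ) * (rb ^ m * m.factorial) * (rc ^ n * n.factorial))) := by
          ring
      _ ≤ ((4:ℝ) ^ m * 4 ^ n * ((m.factorial : ℝ) * (n.factorial : ℝ))) *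
          (A ^ (m + n) * X ^ m * Y ^ n /
            ((m.factorial : ℝ) * (n.factorial : ℝ) * (rb ^ m * m.factorial) * (rc ^ n * n.factorial))) := by
          apply mul_le_mul_of_nonneg_right _ (by positivity)
          have := nat_key m n
          have h2 : (((m + 1) * (n + 1) * (m + n).factorial : ℕ) : ℝ) ≤
              ((4 ^ m * 4 ^ n * (m.factorial * n.factorial) : ℕ) : ℝ) := by exact_mod_cast this
          push_cast at h2
          linarith
      _ = ((4 * A * X / rb) ^ m / m.factorial) * ((4 * A * Y / rc) ^ n / n.factorial) := by
          simp only [pow_add, div_pow, mul_pow]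
          field_simp

lemma poch_norm_pos (b : ℂ) (hb : ∀ n : ℕ, b ≠ -(n : ℂ)) (m : ℕ) : 0 < ‖poch b m‖ := by
  obtain ⟨r, hr, h⟩ := poch_lb b hb
  exact lt_of_lt_of_le (by positivity) (h m)

lemma term_le_dom (a b c : ℂ) (hb : ∀ n : ℕ, b ≠ -(n : ℂ)) (hc : ∀ n : ℕ, c ≠ -(n : ℂ))
    (p : ℕ × ℕ) (K X Y : ℝ) (hX : 0 ≤ X) (hY : 0 ≤ Y)
    (hK : 0 ≤ K) (hK1 : K ≤ ((p.1 : ℝ) + 1) * ((p.2 : ℝ) + 1)) :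
    K * (‖poch a (p.1 + p.2)‖ * X ^ p.1 * Y ^ p.2) /
      ((p.1.factorial : ℝ) * (p.2.factorial : ℝ) * ‖poch b p.1‖ * ‖poch c p.2‖) ≤
    ((p.1 : ℝ) + 1) * ((p.2 : ℝ) + 1) * ‖poch a (p.1 + p.2)‖ * X ^ p.1 * Y ^ p.2 /
      ((p.1.factorial : ℝ) * (p.2.factorial : ℝ) * ‖poch b p.1‖ * ‖poch c p.2‖) := by
  have h1 := poch_norm_pos b hb p.1
  have h2 := poch_norm_pos c hc p.2
  have hfm : (0:ℝ) < p.1.factorial := by exact_mod_cast Nat.factorial_pos p.1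
  have hfn : (0:ℝ) < p.2.factorial := by exact_mod_cast Nat.factorial_pos p.2
  calc K * (‖poch a (p.1 + p.2)‖ * X ^ p.1 * Y ^ p.2) /
        ((p.1.factorial : ℝ) * (p.2.factorial : ℝ) * ‖poch b p.1‖ * ‖poch c p.2‖)
      ≤ (((p.1 : ℝ) + 1) * ((p.2 : ℝ) + 1)) * (‖poch a (p.1 + p.2)‖ * X ^ p.1 * Y ^ p.2) /
        ((p.1.factorial : ℝ) * (p.2.factorial : ℝ) * ‖poch b p.1‖ * ‖poch c p.2‖) := by
        gcongr
    _ = ((p.1 : ℝ) + 1) * ((p.2 : ℝ) + 1) * ‖poch a (p.1 + p.2)‖ * X ^ p.1 * Y ^ p.2 /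
        ((p.1.factorial : ℝ) * (p.2.factorial : ℝ) * ‖poch b p.1‖ * ‖poch c p.2‖) := by
        ring

/-- term-by-term derivative of `psi2` in the first variable -/
lemma psi2_hasDerivAt (a b c : ℂ) (hb : ∀ n : ℕ, b ≠ -(n : ℂ)) (hc : ∀ n : ℕ, c ≠ -(n : ℂ))
    (y x : ℂ) :
    HasDerivAt (fun s => psi2 a b c s y)
      (∑' p : ℕ × ℕ, (poch a (p.1 + p.2) * y ^ p.2 /
        ((p.1.factorial : ℂ) * (p.2.factorial : ℂ) * poch b p.1 * poch c p.2)) *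
        ((p.1 : ℂ) * x ^ (p.1 - 1))) x := by
  set C : ℕ × ℕ → ℂ := fun p => poch a (p.1 + p.2) * y ^ p.2 /
    ((p.1.factorial : ℂ) * (p.2.factorial : ℂ) * poch b p.1 * poch c p.2) with hC
  have hfun : (fun s => psi2 a b c s y) = fun s => ∑' p : ℕ × ℕ, C p * s ^ p.1 := by
    funext s
    rw [psi2]
    exact tsum_congr (fun p => by rw [hC]; ring)
  rw [hfun]
  set R : ℝ := ‖x‖ + 1 with hR
  have hR1 : (1:ℝ) ≤ R := by rw [hR]; linarith [norm_nonneg x]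
  have hnormC : ∀ p : ℕ × ℕ, ‖C p‖ = ‖poch a (p.1 + p.2)‖ * ‖y‖ ^ p.2 /
      ((p.1.factorial : ℝ) * (p.2.factorial : ℝ) * ‖poch b p.1‖ * ‖poch c p.2‖) := by
    intro p; rw [hC]; simp [norm_div, norm_mul, norm_pow]
  have hu : Summable (fun p : ℕ × ℕ => ‖C p‖ * (((p.1 : ℝ) + 1) * R ^ p.1)) := by
    apply (summable_master a b c hb hc R ‖y‖ (by positivity) (norm_nonneg _)).of_nonneg_of_le
    · intro p; positivity
    · intro p
      calc ‖C p‖ * (((p.1 : ℝ) + 1) * R ^ p.1)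
          = ((p.1 : ℝ) + 1) * (‖poch a (p.1 + p.2)‖ * R ^ p.1 * ‖y‖ ^ p.2) /
            ((p.1.factorial : ℝ) * (p.2.factorial : ℝ) * ‖poch b p.1‖ * ‖poch c p.2‖) := by
            rw [hnormC p]; ring
        _ ≤ _ := term_le_dom a b c hb hc p ((p.1 : ℝ) + 1) R ‖y‖ (by positivity)
            (norm_nonneg _) (by positivity)
            (by nlinarith [Nat.cast_nonneg (α := ℝ) p.1, Nat.cast_nonneg (α := ℝ) p.2])
  have hg0 : Summable (fun p : ℕ × ℕ => C p * x ^ p.1) := by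
    apply Summable.of_norm_bounded
      (summable_master a b c hb hc ‖x‖ ‖y‖ (norm_nonneg _) (norm_nonneg _))
    intro p
    calc ‖C p * x ^ p.1‖
        = 1 * (‖poch a (p.1 + p.2)‖ * ‖x‖ ^ p.1 * ‖y‖ ^ p.2) /
          ((p.1.factorial : ℝ) * (p.2.factorial : ℝ) * ‖poch b p.1‖ * ‖poch c p.2‖) := by
          rw [norm_mul, hnormC p, norm_pow]; ring
      _ ≤ _ := term_le_dom a b c hb hc p 1 ‖x‖ ‖y‖ (norm_nonneg _) (norm_nonneg _)
          (by norm_num)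
          (by nlinarith [Nat.cast_nonneg (α := ℝ) p.1, Nat.cast_nonneg (α := ℝ) p.2])
  have hx_mem : x ∈ Metric.ball (0:ℂ) R := by
    simp only [Metric.mem_ball, dist_zero_right]
    rw [hR]; linarith
  exact hasDerivAt_tsum_of_isPreconnected hu Metric.isOpen_ball
    (convex_ball (0:ℂ) R).isPreconnected
    (fun p s _ => (hasDerivAt_pow p.1 s).const_mul (C p))
    (fun p s hs => by
      rw [norm_mul, norm_mul, Complex.norm_natCast, norm_pow]
      rcases Nat.eq_zero_or_pos p.1 with h0 | h0
      · simp only [h0, Nat.cast_zero, zero_mul, mul_zero, pow_zero, zero_add, one_mul]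
        positivity
      · have hsR : ‖s‖ ≤ R := le_of_lt (by simpa [dist_zero_right] using hs)
        have hs0 : (0:ℝ) ≤ ‖s‖ := norm_nonneg _
        have hpow : ‖s‖ ^ (p.1 - 1) ≤ R ^ p.1 := by
          calc ‖s‖ ^ (p.1 - 1) ≤ R ^ (p.1 - 1) := pow_le_pow_left₀ hs0 hsR _
            _ ≤ R ^ p.1 := pow_le_pow_right₀ hR1 (Nat.sub_le _ _)
        apply mul_le_mul_of_nonneg_left _ (norm_nonneg _)
        apply mul_le_mul (by linarith) hpow (by positivity) (by positivity))
    hx_mem hg0 hx_mem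

lemma psi2_swap (a b c x y : ℂ) : psi2 a b c x y = psi2 a c b y x := by
  rw [psi2, psi2]
  refine (tsum_congr ?_).trans ((Equiv.prodComm ℕ ℕ).tsum_eq _)
  intro p
  simp only [Equiv.prodComm_apply, Prod.fst_swap, Prod.snd_swap]
  rw [add_comm p.2 p.1]
  ring

theorem stmt9 (a b c x y : ℂ) (hb : ∀ n : ℕ, b ≠ -(n : ℂ)) (hc : ∀ n : ℕ, c ≠ -(n : ℂ)) :
    x * deriv (fun s => psi2 a b c s y) x + y * deriv (fun s => psi2 a b c x s) y +
      a * psi2 a b c x y = a * psi2 (a + 1) b c x y := by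
  set T : ℕ × ℕ → ℂ := fun p => poch a (p.1 + p.2) * x ^ p.1 * y ^ p.2 /
    ((p.1.factorial : ℂ) * (p.2.factorial : ℂ) * poch b p.1 * poch c p.2) with hT
  have hnormT : ∀ p : ℕ × ℕ, ‖T p‖ = ‖poch a (p.1 + p.2)‖ * ‖x‖ ^ p.1 * ‖y‖ ^ p.2 /
      ((p.1.factorial : ℝ) * (p.2.factorial : ℝ) * ‖poch b p.1‖ * ‖poch c p.2‖) := by
    intro p; rw [hT]; simp [norm_div, norm_mul, norm_pow]
  have hST : Summable T := by
    apply Summable.of_norm_bounded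
      (summable_master a b c hb hc ‖x‖ ‖y‖ (norm_nonneg _) (norm_nonneg _))
    intro p
    calc ‖T p‖ = 1 * (‖poch a (p.1 + p.2)‖ * ‖x‖ ^ p.1 * ‖y‖ ^ p.2) /
          ((p.1.factorial : ℝ) * (p.2.factorial : ℝ) * ‖poch b p.1‖ * ‖poch c p.2‖) := by
          rw [hnormT p]; ring
      _ ≤ _ := term_le_dom a b c hb hc p 1 ‖x‖ ‖y‖ (norm_nonneg _) (norm_nonneg _)
          (by norm_num)
          (by nlinarith [Nat.cast_nonneg (α := ℝ) p.1, Nat.cast_nonneg (α := ℝ) p.2])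
  have hSm : Summable (fun p : ℕ × ℕ => (p.1 : ℂ) * T p) := by
    apply Summable.of_norm_bounded
      (summable_master a b c hb hc ‖x‖ ‖y‖ (norm_nonneg _) (norm_nonneg _))
    intro p
    calc ‖(p.1 : ℂ) * T p‖
        = (p.1 : ℝ) * (‖poch a (p.1 + p.2)‖ * ‖x‖ ^ p.1 * ‖y‖ ^ p.2) /
          ((p.1.factorial : ℝ) * (p.2.factorial : ℝ) * ‖poch b p.1‖ * ‖poch c p.2‖) := by
          rw [norm_mul, hnormT p, Complex.norm_natCast]; ring
      _ ≤ _ := term_le_dom a b c hb hc p (p.1 : ℝ) ‖x‖ ‖y‖ (norm_nonneg _) (norm_nonneg _)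
          (Nat.cast_nonneg _)
          (by nlinarith [Nat.cast_nonneg (α := ℝ) p.1, Nat.cast_nonneg (α := ℝ) p.2])
  have hSn : Summable (fun p : ℕ × ℕ => (p.2 : ℂ) * T p) := by
    apply Summable.of_norm_bounded
      (summable_master a b c hb hc ‖x‖ ‖y‖ (norm_nonneg _) (norm_nonneg _))
    intro p
    calc ‖(p.2 : ℂ) * T p‖
        = (p.2 : ℝ) * (‖poch a (p.1 + p.2)‖ * ‖x‖ ^ p.1 * ‖y‖ ^ p.2) /
          ((p.1.factorial : ℝ) * (p.2.factorial : ℝ) * ‖poch b p.1‖ * ‖poch c p.2‖) := by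
          rw [norm_mul, hnormT p, Complex.norm_natCast]; ring
      _ ≤ _ := term_le_dom a b c hb hc p (p.2 : ℝ) ‖x‖ ‖y‖ (norm_nonneg _) (norm_nonneg _)
          (Nat.cast_nonneg _)
          (by nlinarith [Nat.cast_nonneg (α := ℝ) p.1, Nat.cast_nonneg (α := ℝ) p.2])
  have hSa : Summable (fun p : ℕ × ℕ => a * T p) := hST.mul_left a
  have hdx : x * deriv (fun s => psi2 a b c s y) x = ∑' p : ℕ × ℕ, (p.1 : ℂ) * T p := by
    rw [(psi2_hasDerivAt a b c hb hc y x).deriv, ← tsum_mul_left]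
    apply tsum_congr
    rintro ⟨m, n⟩
    rcases m with _ | k
    · simp
    · simp only [hT, Nat.add_sub_cancel]
      push_cast
      ring
  have hswap : (fun s => psi2 a b c x s) = fun s => psi2 a c b s x := by
    funext s; exact psi2_swap a b c x s
  have hdy : y * deriv (fun s => psi2 a b c x s) y = ∑' p : ℕ × ℕ, (p.2 : ℂ) * T p := by
    rw [hswap, (psi2_hasDerivAt a c b hc hb x y).deriv, ← tsum_mul_left]
    refine (tsum_congr ?_).trans ((Equiv.prodComm ℕ ℕ).tsum_eq (fun p : ℕ × ℕ => (p.2 : ℂ) * T p))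
    rintro ⟨m, n⟩
    simp only [Equiv.prodComm_apply, Prod.fst_swap, Prod.snd_swap, hT]
    rcases m with _ | k
    · simp
    · simp only [Nat.add_sub_cancel]
      rw [add_comm n (k + 1)]
      push_cast
      ring
  have h3 : a * psi2 a b c x y = ∑' p : ℕ × ℕ, a * T p := by
    rw [psi2, ← tsum_mul_left]
  have h4 : a * psi2 (a + 1) b c x y = ∑' p : ℕ × ℕ,
      a * (poch (a + 1) (p.1 + p.2) * x ^ p.1 * y ^ p.2 /
        ((p.1.factorial : ℂ) * (p.2.factorial : ℂ) * poch b p.1 * poch c p.2)) := by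
    rw [psi2, ← tsum_mul_left]
  rw [hdx, hdy, h3, h4, ← Summable.tsum_add hSm hSn, ← Summable.tsum_add (hSm.add hSn) hSa]
  apply tsum_congr
  rintro ⟨m, n⟩
  have h := poch_mul_add a (m + n)
  push_cast at h
  simp only [hT]
  linear_combination (x ^ m * y ^ n /
    ((m.factorial : ℂ) * (n.factorial : ℂ) * poch b m * poch c n)) * h
end

section
/- Let a, b, c, x, y, χ be complex numbers with b and c not nonpositive integers and |χ| < 1. Then (1−χ)^{−a} Ψ₂(a;b,c; x/(1−χ), y/(1−χ)) = Σ_{ℓ=0}^∞ ((a)_ℓ / ℓ!) Ψ₂(a+ℓ;b,c;x,y) χ^ℓ, where (1−χ)^{−a} = exp(−a·Log(1−χ)) is taken with the principal branch of the logarithm. -/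
open Complex

noncomputable def pochR (q : ℝ) (n : ℕ) : ℝ := (ascPochhammer ℝ n).eval q

lemma pochR_zero (q : ℝ) : pochR q 0 = 1 := by simp [pochR]

lemma pochR_succ (q : ℝ) (n : ℕ) : pochR q (n + 1) = pochR q n * (q + n) := by
  simp [pochR, ascPochhammer_succ_right]

lemma poch_add (q : ℂ) (m n : ℕ) : poch q (m + n) = poch q m * poch (q + m) n := by
  induction n with
  | zero => simp [poch_zero]
  | succ n ih => rw [← add_assoc, poch_succ, ih, poch_succ]; push_cast; ring

lemma pochR_add (q : ℝ) (m n : ℕ) : pochR q (m + n) = pochR q m * pochR (q + m) n := by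
  induction n with
  | zero => simp [pochR_zero]
  | succ n ih => rw [← add_assoc, pochR_succ, ih, pochR_succ]; push_cast; ring

lemma poch_ne_zero_s14 {q : ℂ} (hq : ∀ k : ℕ, q ≠ -(k : ℂ)) (n : ℕ) : poch q n ≠ 0 := by
  induction n with
  | zero => simp [poch_zero]
  | succ n ih =>
    rw [poch_succ]
    refine mul_ne_zero ih ?_
    intro h
    exact hq n (by linear_combination h)


lemma pochR_nonneg {q : ℝ} (hq : 0 ≤ q) (n : ℕ) : 0 ≤ pochR q n := by
  induction n with
  | zero => simp [pochR_zero]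
  | succ n ih => rw [pochR_succ]; positivity

lemma pochR_pos {q : ℝ} (hq : 0 < q) (n : ℕ) : 0 < pochR q n := by
  induction n with
  | zero => simp [pochR_zero]
  | succ n ih => rw [pochR_succ]; positivity

lemma pochR_mono {q r : ℝ} (hq : 0 ≤ q) (hqr : q ≤ r) (n : ℕ) : pochR q n ≤ pochR r n := by
  induction n with
  | zero => simp [pochR_zero]
  | succ n ih =>
    rw [pochR_succ, pochR_succ]
    have := pochR_nonneg hq n
    have := pochR_nonneg (hq.trans hqr) n
    have hn : (0:ℝ) ≤ n := Nat.cast_nonneg n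
    nlinarith

lemma norm_poch_le (q : ℂ) (n : ℕ) : ‖poch q n‖ ≤ pochR ‖q‖ n := by
  induction n with
  | zero => simp [poch_zero, pochR_zero]
  | succ n ih =>
    rw [poch_succ, pochR_succ, norm_mul]
    refine mul_le_mul ih ?_ (norm_nonneg _) (pochR_nonneg (norm_nonneg q) n)
    calc ‖q + (n : ℂ)‖ ≤ ‖q‖ + ‖(n : ℂ)‖ := norm_add_le _ _
      _ = ‖q‖ + n := by simp

lemma poch_ofReal (q : ℝ) (n : ℕ) : poch (q : ℂ) n = ((pochR q n : ℝ) : ℂ) := by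
  induction n with
  | zero => simp [poch_zero, pochR_zero]
  | succ n ih => rw [poch_succ, pochR_succ, ih]; push_cast; ring

lemma hasSum_binom (t : ℂ) {χ : ℂ} (hχ : ‖χ‖ < 1) :
    HasSum (fun ℓ : ℕ => poch t ℓ * χ ^ ℓ / (ℓ.factorial : ℂ)) ((1 - χ) ^ (-t)) := by
  set S : Set ℂ := (fun z => 1 - z) ⁻¹' Complex.slitPlane with hS
  have hopen : IsOpen S := Complex.isOpen_slitPlane.preimage (by fun_prop)
  have hball : Metric.ball (0 : ℂ) 1 ⊆ S := by
    intro z hz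
    rw [Metric.mem_ball, dist_zero_right] at hz
    have : z.re < 1 := lt_of_le_of_lt (Complex.re_le_norm z) hz
    exact Or.inl (by simpa [Complex.sub_re] using by linarith)
  set f : ℂ → ℂ := fun z => (1 - z) ^ (-t) with hf
  have hderiv : ∀ n : ℕ, ∀ z ∈ S, iteratedDeriv n f z = poch t n * (1 - z) ^ (-t - n) := by
    intro n
    induction n with
    | zero => intro z hz; simp [poch_zero, hf]
    | succ n ih =>
      intro z hz
      rw [iteratedDeriv_succ]
      have hev : iteratedDeriv n f =ᶠ[nhds z] (fun w => poch t n * (1 - w) ^ (-t - n)) :=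
        Filter.eventuallyEq_of_mem (hopen.mem_nhds hz) ih
      rw [hev.deriv_eq]
      have hd : HasDerivAt (fun w : ℂ => (1 - w) ^ (-t - n))
          ((-t - n) * (1 - z) ^ (-t - n - 1) * (-1)) z := by
        have h1 : HasDerivAt (fun w : ℂ => 1 - w) (-1) z := by
          simpa using (hasDerivAt_id z).const_sub 1
        exact h1.cpow_const hz
      rw [deriv_const_mul _ hd.differentiableAt, hd.deriv]
      have hexp : (-t - (n : ℂ) - 1) = -t - ((n + 1 : ℕ) : ℂ) := by push_cast; ring
      rw [hexp, poch_succ]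
      ring
  have hdiff : DifferentiableOn ℂ f (Metric.ball (0 : ℂ) 1) := by
    intro z hz
    have h1 : HasDerivAt (fun w : ℂ => 1 - w) (-1) z := by
      simpa using (hasDerivAt_id z).const_sub 1
    exact (h1.cpow_const (hball hz)).differentiableAt.differentiableWithinAt
  have hmem : χ ∈ Metric.ball (0 : ℂ) 1 := by
    rw [Metric.mem_ball, dist_zero_right]; exact hχ
  have H := Complex.hasSum_taylorSeries_on_ball hdiff hmem
  have h0 : (0 : ℂ) ∈ S := hball (by simp [Metric.mem_ball])
  have : ∀ n : ℕ, ((n.factorial : ℂ))⁻¹ • (χ - 0) ^ n • iteratedDeriv n f 0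
      = poch t n * χ ^ n / (n.factorial : ℂ) := by
    intro n
    rw [hderiv n 0 h0]
    simp [smul_eq_mul, Complex.one_cpow]
    ring
  rw [show f χ = (1 - χ) ^ (-t) from rfl] at H
  exact (funext this) ▸ H

lemma hasSum_binomR (t : ℝ) {s : ℝ} (hs : |s| < 1) :
    HasSum (fun ℓ : ℕ => pochR t ℓ * s ^ ℓ / (ℓ.factorial : ℝ)) ((1 - s) ^ (-t)) := by
  have hs' : ‖(s : ℂ)‖ < 1 := by simpa [Complex.norm_real] using hs
  have H := hasSum_binom (t : ℂ) hs'
  have h1 : (0 : ℝ) ≤ 1 - s := by have := abs_lt.mp hs; linarith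
  have hval : ((1 : ℂ) - (s : ℂ)) ^ (-(t : ℂ)) = (((1 - s) ^ (-t) : ℝ) : ℂ) := by
    rw [show (1 : ℂ) - (s : ℂ) = ((1 - s : ℝ) : ℂ) by push_cast; ring,
      show (-(t : ℂ)) = ((-t : ℝ) : ℂ) by push_cast; ring]
    exact (Complex.ofReal_cpow h1 (-t)).symm
  rw [hval] at H
  rw [← Complex.hasSum_ofReal]
  convert H using 2 with ℓ
  rw [poch_ofReal]
  push_cast
  ring

/-- One-variable ratio-test summability. -/
lemma one_var_summable (K : ℕ) {r : ℝ} (hr : 0 < r) {d : ℂ} (hd : ∀ k : ℕ, d ≠ -(k : ℂ)) :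
    Summable (fun m : ℕ => pochR K m * r ^ m / ((m.factorial : ℝ) * ‖poch d m‖)) := by
  set f : ℕ → ℝ := fun m => pochR K m * r ^ m / ((m.factorial : ℝ) * ‖poch d m‖) with hfdef
  have hKpos : (0:ℝ) < (K:ℝ) + 1 := by positivity
  have hfpos : ∀ m, 0 < f m ∨ 0 ≤ f m := fun m => Or.inr (by
    have := pochR_nonneg (by positivity : (0:ℝ) ≤ (K:ℝ)) m
    have h2 : (0:ℝ) < ‖poch d m‖ := norm_pos_iff.mpr (poch_ne_zero_s14 hd m)
    positivity)
  refine summable_of_ratio_norm_eventually_le (r := 1/2) (by norm_num) ?_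
  have hM : ∀ m : ℕ, (K ≤ m) → (2 * ‖d‖ ≤ (m:ℝ)) → (8 * r ≤ (m:ℝ)) → (1 ≤ m) →
      ‖f (m+1)‖ ≤ 1/2 * ‖f m‖ := by
    intro m h1 h2 h3 h4
    have hpo : (0:ℝ) < ‖poch d m‖ := norm_pos_iff.mpr (poch_ne_zero_s14 hd m)
    have hpoK : 0 ≤ pochR K m := pochR_nonneg (by positivity) m
    have hfact : (0:ℝ) < (m.factorial : ℝ) := by positivity
    have hdm : (m:ℝ) - ‖d‖ ≤ ‖d + m‖ := by
      have : ‖(m : ℂ)‖ - ‖d‖ ≤ ‖d + m‖ := by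
        calc ‖(m : ℂ)‖ - ‖d‖ ≤ ‖(m:ℂ) + d‖ := by
              have := norm_sub_le ((m:ℂ) + d) d
              simp only [add_sub_cancel_right] at this
              linarith
          _ = ‖d + m‖ := by rw [add_comm]
      simpa using this
    have hdm2 : (m:ℝ)/2 ≤ ‖d + m‖ := by linarith
    have hfm : 0 ≤ f m := by positivity
    have key : f (m+1) = f m * (((K:ℝ) + m) * r / (((m:ℝ)+1) * ‖d + m‖)) := by
      rw [hfdef]
      simp only
      rw [pochR_succ, poch_succ, norm_mul, Nat.factorial_succ]
      push_cast
      field_simp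
      ring
    have hm1 : (1:ℝ) ≤ (m:ℝ) := by exact_mod_cast h4
    have hdm3 : (0:ℝ) < ‖d + m‖ := lt_of_lt_of_le (by linarith) hdm2
    have hKm : (K:ℝ) ≤ (m:ℝ) := by exact_mod_cast h1
    have hq : ((K:ℝ) + m) * r / (((m:ℝ)+1) * ‖d + m‖) ≤ 1/2 := by
      rw [div_le_iff₀ (by positivity)]
      nlinarith [hr.le, mul_le_mul_of_nonneg_left h3 (show (0:ℝ) ≤ (m:ℝ)/4 by positivity),
        mul_le_mul_of_nonneg_right hKm hr.le,
        mul_le_mul_of_nonneg_left hdm2 (show (0:ℝ) ≤ ((m:ℝ)+1)/2 by positivity)]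
    have : f (m+1) ≤ 1/2 * f m := by
      rw [key]
      calc f m * (((K:ℝ) + m) * r / (((m:ℝ)+1) * ‖d + m‖)) ≤ f m * (1/2) :=
            mul_le_mul_of_nonneg_left hq hfm
        _ = 1/2 * f m := by ring
    have hf1 : 0 ≤ f (m+1) := by
      have := pochR_nonneg (by positivity : (0:ℝ) ≤ (K:ℝ)) (m+1)
      have h2' : (0:ℝ) < ‖poch d (m+1)‖ := norm_pos_iff.mpr (poch_ne_zero_s14 hd (m+1))
      positivity
    rw [Real.norm_of_nonneg hf1, Real.norm_of_nonneg hfm]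
    exact this
  rw [Filter.eventually_atTop]
  refine ⟨K + ⌈2 * ‖d‖⌉₊ + ⌈8 * r⌉₊ + 1, fun m hm => ?_⟩
  refine hM m (by omega) ?_ ?_ (by omega)
  · calc 2 * ‖d‖ ≤ (⌈2 * ‖d‖⌉₊ : ℝ) := Nat.le_ceil _
      _ ≤ (m : ℝ) := by exact_mod_cast (by omega : ⌈2 * ‖d‖⌉₊ ≤ m)
  · calc 8 * r ≤ (⌈8 * r⌉₊ : ℝ) := Nat.le_ceil _
      _ ≤ (m : ℝ) := by exact_mod_cast (by omega : ⌈8 * r⌉₊ ≤ m)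

lemma fact_add_le (m n : ℕ) : ((m + n).factorial : ℝ) ≤ 2 ^ (m + n) * m.factorial * n.factorial := by
  have h1 : (m + n).choose m * m.factorial * n.factorial = (m + n).factorial := by
    have := Nat.choose_mul_factorial_mul_factorial (Nat.le_add_right m n)
    simpa using this
  have h2 : (m + n).choose m ≤ 2 ^ (m + n) := by
    calc (m + n).choose m ≤ ∑ k ∈ Finset.range (m + n + 1), (m + n).choose k :=
          Finset.single_le_sum (fun k _ => Nat.zero_le _) (Finset.mem_range.mpr (by omega))
      _ = 2 ^ (m + n) := Nat.sum_range_choose (m + n)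
  calc ((m + n).factorial : ℝ) = ((m + n).choose m * m.factorial * n.factorial : ℕ) := by
        rw [h1]
    _ ≤ ((2 ^ (m + n) * m.factorial * n.factorial : ℕ) : ℝ) := by
        exact_mod_cast Nat.mul_le_mul_right _ (Nat.mul_le_mul_right _ h2)
    _ = 2 ^ (m + n) * m.factorial * n.factorial := by push_cast; ring

lemma fact_mul_pochR (j : ℕ) : ∀ n : ℕ,
    (j.factorial : ℝ) * pochR ((j : ℝ) + 1) n = ((j + n).factorial : ℝ) := by
  intro n
  induction n with
  | zero => simp [pochR_zero]
  | succ n ih =>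
    rw [pochR_succ, ← mul_assoc, ih, show j + (n+1) = (j + n) + 1 by omega, Nat.factorial_succ]
    push_cast
    ring

lemma pochR_le_factorial (n : ℕ) : (n.factorial : ℝ) ≤ pochR 1 n := by
  have := fact_mul_pochR 0 n
  simp [Nat.factorial] at this
  simp [this]

lemma pochR_split (j m n : ℕ) : pochR ((j:ℝ)+1) (m+n) ≤
    2 ^ j * (2 ^ m * pochR ((j:ℝ)+1) m) * (2 ^ n * pochR ((j:ℝ)+1) n) := by
  have hj : (0:ℝ) < j.factorial := by positivity
  rw [← mul_le_mul_iff_right₀ hj]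
  have e1 := fact_mul_pochR j (m+n)
  have e2 := fact_mul_pochR j m
  calc (j.factorial : ℝ) * pochR ((j:ℝ)+1) (m+n) = (((j+m) + n).factorial : ℝ) := by
        rw [e1]; congr 2; omega
    _ ≤ 2 ^ ((j+m) + n) * (j+m).factorial * n.factorial := fact_add_le (j+m) n
    _ ≤ 2 ^ ((j+m) + n) * ((j.factorial : ℝ) * pochR ((j:ℝ)+1) m) * pochR ((j:ℝ)+1) n := by
        rw [e2]
        have h3 : (n.factorial : ℝ) ≤ pochR ((j:ℝ)+1) n :=
          le_trans (pochR_le_factorial n) (pochR_mono (by norm_num) (by push_cast; linarith [Nat.cast_nonneg (α := ℝ) j]) n)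
        have h4 : (0:ℝ) ≤ 2 ^ ((j+m)+n) * (((j+m).factorial : ℝ)) := by positivity
        exact mul_le_mul_of_nonneg_left h3 h4
    _ = (j.factorial : ℝ) * (2 ^ j * (2 ^ m * pochR ((j:ℝ)+1) m) * (2 ^ n * pochR ((j:ℝ)+1) n)) := by
        rw [pow_add, pow_add]; ring

lemma psi2_real_summable {b c : ℂ} (hb : ∀ k : ℕ, b ≠ -(k : ℂ)) (hc : ∀ k : ℕ, c ≠ -(k : ℂ))
    {A X Y : ℝ} (hA : 0 ≤ A) (hX : 0 ≤ X) (hY : 0 ≤ Y) :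
    Summable (fun p : ℕ × ℕ => pochR A (p.1 + p.2) * X ^ p.1 * Y ^ p.2 /
      ((p.1.factorial : ℝ) * (p.2.factorial : ℝ) * ‖poch b p.1‖ * ‖poch c p.2‖)) := by
  set j := ⌈A⌉₊ with hj
  have hAj : A ≤ (j:ℝ) + 1 := le_trans (Nat.le_ceil A) (by rw [hj]; linarith)
  set u : ℕ → ℝ := fun m => pochR ((j+1 : ℕ) : ℝ) m * (2*X+1) ^ m / ((m.factorial : ℝ) * ‖poch b m‖) with hu
  set v : ℕ → ℝ := fun n => pochR ((j+1 : ℕ) : ℝ) n * (2*Y+1) ^ n / ((n.factorial : ℝ) * ‖poch c n‖) with hv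
  have hsu : Summable u := one_var_summable (j+1) (by linarith) hb
  have hsv : Summable v := one_var_summable (j+1) (by linarith) hc
  have hprod : Summable (fun p : ℕ × ℕ => (2:ℝ)^j * (u p.1 * v p.2)) :=
    ((hsu.mul_of_nonneg hsv (fun m => by
        have := pochR_nonneg (by positivity : (0:ℝ) ≤ ((j+1:ℕ):ℝ)) m
        have h2 : (0:ℝ) < ‖poch b m‖ := norm_pos_iff.mpr (poch_ne_zero_s14 hb m)
        positivity) (fun n => by
        have := pochR_nonneg (by positivity : (0:ℝ) ≤ ((j+1:ℕ):ℝ)) n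
        have h2 : (0:ℝ) < ‖poch c n‖ := norm_pos_iff.mpr (poch_ne_zero_s14 hc n)
        positivity)).mul_left _)
  refine Summable.of_nonneg_of_le (fun p => ?_) (fun p => ?_) hprod
  · have := pochR_nonneg hA (p.1 + p.2)
    have h2 : (0:ℝ) < ‖poch b p.1‖ := norm_pos_iff.mpr (poch_ne_zero_s14 hb p.1)
    have h3 : (0:ℝ) < ‖poch c p.2‖ := norm_pos_iff.mpr (poch_ne_zero_s14 hc p.2)
    positivity
  · obtain ⟨m, n⟩ := p
    simp only [hu, hv]
    have hBm : (0:ℝ) < ‖poch b m‖ := norm_pos_iff.mpr (poch_ne_zero_s14 hb m)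
    have hCn : (0:ℝ) < ‖poch c n‖ := norm_pos_iff.mpr (poch_ne_zero_s14 hc n)
    have hfm : (0:ℝ) < (m.factorial : ℝ) := by positivity
    have hfn : (0:ℝ) < (n.factorial : ℝ) := by positivity
    have hnum : pochR A (m + n) * X ^ m * Y ^ n ≤
        2^j * (pochR ((j+1:ℕ):ℝ) m * (2*X+1)^m) * (pochR ((j+1:ℕ):ℝ) n * (2*Y+1)^n) := by
      have s1 : pochR A (m+n) ≤ pochR ((j:ℝ)+1) (m+n) := pochR_mono hA hAj _
      have s2 := pochR_split j m n
      have hXm : X ^ m * 2^m ≤ (2*X+1)^m := by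
        calc X ^ m * 2^m = (2*X)^m := by rw [mul_pow]; ring
          _ ≤ (2*X+1)^m := pow_le_pow_left₀ (by linarith) (by linarith) m
      have hYn : Y ^ n * 2^n ≤ (2*Y+1)^n := by
        calc Y ^ n * 2^n = (2*Y)^n := by rw [mul_pow]; ring
          _ ≤ (2*Y+1)^n := pow_le_pow_left₀ (by linarith) (by linarith) n
      have hXm0 : (0:ℝ) ≤ X ^ m := by positivity
      have hYn0 : (0:ℝ) ≤ Y ^ n := by positivity
      have hpm : (0:ℝ) ≤ pochR ((j:ℝ)+1) m := pochR_nonneg (by positivity) m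
      have hpn : (0:ℝ) ≤ pochR ((j:ℝ)+1) n := pochR_nonneg (by positivity) n
      have hcast : ((j+1:ℕ):ℝ) = (j:ℝ)+1 := by push_cast; ring
      rw [hcast]
      calc pochR A (m + n) * X ^ m * Y ^ n
          ≤ (2 ^ j * (2 ^ m * pochR ((j:ℝ)+1) m) * (2 ^ n * pochR ((j:ℝ)+1) n)) * X ^ m * Y ^ n := by
            have : pochR A (m+n) ≤ 2 ^ j * (2 ^ m * pochR ((j:ℝ)+1) m) * (2 ^ n * pochR ((j:ℝ)+1) n) :=
              le_trans s1 s2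
            exact mul_le_mul_of_nonneg_right (mul_le_mul_of_nonneg_right this hXm0) hYn0
        _ = 2^j * (pochR ((j:ℝ)+1) m * (X^m * 2^m)) * (pochR ((j:ℝ)+1) n * (Y^n * 2^n)) := by ring
        _ ≤ 2^j * (pochR ((j:ℝ)+1) m * (2*X+1)^m) * (pochR ((j:ℝ)+1) n * (2*Y+1)^n) := by
            have t1 : pochR ((j:ℝ)+1) m * (X^m * 2^m) ≤ pochR ((j:ℝ)+1) m * (2*X+1)^m :=
              mul_le_mul_of_nonneg_left hXm hpm
            have t2 : pochR ((j:ℝ)+1) n * (Y^n * 2^n) ≤ pochR ((j:ℝ)+1) n * (2*Y+1)^n :=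
              mul_le_mul_of_nonneg_left hYn hpn
            have nn1 : (0:ℝ) ≤ 2^j * (pochR ((j:ℝ)+1) m * (2*X+1)^m) := by positivity
            have nn2 : (0:ℝ) ≤ pochR ((j:ℝ)+1) n * (Y^n * 2^n) := by positivity
            calc 2^j * (pochR ((j:ℝ)+1) m * (X^m * 2^m)) * (pochR ((j:ℝ)+1) n * (Y^n * 2^n))
                ≤ 2^j * (pochR ((j:ℝ)+1) m * (2*X+1)^m) * (pochR ((j:ℝ)+1) n * (Y^n * 2^n)) := by
                  exact mul_le_mul_of_nonneg_right (mul_le_mul_of_nonneg_left t1 (by positivity)) nn2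
              _ ≤ 2^j * (pochR ((j:ℝ)+1) m * (2*X+1)^m) * (pochR ((j:ℝ)+1) n * (2*Y+1)^n) :=
                  mul_le_mul_of_nonneg_left t2 nn1
    calc pochR A (m + n) * X ^ m * Y ^ n /
        ((m.factorial : ℝ) * (n.factorial : ℝ) * ‖poch b m‖ * ‖poch c n‖)
        ≤ (2^j * (pochR ((j+1:ℕ):ℝ) m * (2*X+1)^m) * (pochR ((j+1:ℕ):ℝ) n * (2*Y+1)^n)) /
          ((m.factorial : ℝ) * (n.factorial : ℝ) * ‖poch b m‖ * ‖poch c n‖) := by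
          exact (div_le_div_iff_of_pos_right (by positivity)).mpr hnum
      _ = 2^j * (pochR ((j+1:ℕ):ℝ) m * (2*X+1)^m / ((m.factorial : ℝ) * ‖poch b m‖) *
            (pochR ((j+1:ℕ):ℝ) n * (2*Y+1)^n / ((n.factorial : ℝ) * ‖poch c n‖))) := by
          field_simp

theorem stmt14 (a b c x y χ : ℂ) (hb : ∀ n : ℕ, b ≠ -(n : ℂ)) (hc : ∀ n : ℕ, c ≠ -(n : ℂ))
    (hχ : ‖χ‖ < 1) :
    HasSum (fun ℓ : ℕ => poch a ℓ / (ℓ.factorial : ℂ) * psi2 (a + ℓ) b c x y * χ ^ ℓ)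
      ((1 - χ) ^ (-a) * psi2 a b c (x / (1 - χ)) (y / (1 - χ))) := by
  set r : ℝ := ‖χ‖ with hrdef
  have hr0 : 0 ≤ r := norm_nonneg χ
  have h1r : 0 < 1 - r := by linarith
  have h1χ : (1 : ℂ) - χ ≠ 0 := by
    intro hz
    have hχ1 : χ = 1 := by linear_combination -hz
    have : r = 1 := by rw [hrdef, hχ1]; simp
    linarith
  set A : ℝ := ‖a‖ with hA
  set X : ℝ := ‖x‖ with hX
  set Y : ℝ := ‖y‖ with hY
  set u : ℝ := (1 - r)⁻¹ with hu
  have hu0 : 0 ≤ u := by positivity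
  set F : (ℕ × ℕ) × ℕ → ℂ := fun p =>
    poch a (p.2 + (p.1.1 + p.1.2)) * x ^ p.1.1 * y ^ p.1.2 * χ ^ p.2 /
      ((p.1.1.factorial : ℂ) * (p.1.2.factorial : ℂ) * (p.2.factorial : ℂ) *
        poch b p.1.1 * poch c p.1.2) with hF
  set h : (ℕ × ℕ) × ℕ → ℝ := fun p =>
    pochR A (p.2 + (p.1.1 + p.1.2)) * X ^ p.1.1 * Y ^ p.1.2 * r ^ p.2 /
      ((p.1.1.factorial : ℝ) * (p.1.2.factorial : ℝ) * (p.2.factorial : ℝ) *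
        ‖poch b p.1.1‖ * ‖poch c p.1.2‖) with hh
  have hBpos : ∀ m : ℕ, (0:ℝ) < ‖poch b m‖ := fun m => norm_pos_iff.mpr (poch_ne_zero_s14 hb m)
  have hCpos : ∀ n : ℕ, (0:ℝ) < ‖poch c n‖ := fun n => norm_pos_iff.mpr (poch_ne_zero_s14 hc n)
  have hden_pos : ∀ m n ℓ : ℕ, (0:ℝ) < (m.factorial : ℝ) * (n.factorial : ℝ) *
      (ℓ.factorial : ℝ) * ‖poch b m‖ * ‖poch c n‖ := by
    intro m n ℓ
    have h2 := hBpos m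
    have h3 := hCpos n
    positivity
  have hh_nonneg : ∀ p, 0 ≤ h p := by
    rintro ⟨⟨m, n⟩, ℓ⟩
    have h0 : 0 ≤ pochR A (ℓ + (m + n)) := pochR_nonneg (norm_nonneg a) _
    have h2 := hBpos m
    have h3 := hCpos n
    simp only [hh]
    positivity
  have hnormF : ∀ p, ‖F p‖ ≤ h p := by
    rintro ⟨⟨m, n⟩, ℓ⟩
    simp only [hF, hh]
    rw [norm_div]
    have hdeq : ‖(m.factorial : ℂ) * (n.factorial : ℂ) * (ℓ.factorial : ℂ) *
        poch b m * poch c n‖ = (m.factorial : ℝ) * (n.factorial : ℝ) *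
        (ℓ.factorial : ℝ) * ‖poch b m‖ * ‖poch c n‖ := by
      simp [norm_mul, Complex.norm_natCast]
    rw [hdeq]
    refine (div_le_div_iff_of_pos_right (hden_pos m n ℓ)).mpr ?_
    have hxn : ‖x‖ = X := rfl
    have hyn : ‖y‖ = Y := rfl
    have hcn : ‖χ‖ = r := rfl
    calc ‖poch a (ℓ + (m + n)) * x ^ m * y ^ n * χ ^ ℓ‖
        = ‖poch a (ℓ + (m + n))‖ * X ^ m * Y ^ n * r ^ ℓ := by
          rw [norm_mul, norm_mul, norm_mul, norm_pow, norm_pow, norm_pow, hxn, hyn, hcn]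
      _ ≤ pochR A (ℓ + (m + n)) * X ^ m * Y ^ n * r ^ ℓ := by
          have h1 := norm_poch_le a (ℓ + (m + n))
          have nn : (0:ℝ) ≤ X ^ m * Y ^ n * r ^ ℓ := by positivity
          calc ‖poch a (ℓ + (m + n))‖ * X ^ m * Y ^ n * r ^ ℓ
              = ‖poch a (ℓ + (m + n))‖ * (X ^ m * Y ^ n * r ^ ℓ) := by ring
            _ ≤ pochR A (ℓ + (m + n)) * (X ^ m * Y ^ n * r ^ ℓ) :=
                mul_le_mul_of_nonneg_right h1 nn
            _ = pochR A (ℓ + (m + n)) * X ^ m * Y ^ n * r ^ ℓ := by ring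
  have habs_r : |r| < 1 := by rwa [_root_.abs_of_nonneg hr0]
  -- sum over ℓ of the majorant slices
  have hslice_h : ∀ mn : ℕ × ℕ, HasSum (fun ℓ => h (mn, ℓ))
      ((pochR A (mn.1 + mn.2) * X ^ mn.1 * Y ^ mn.2 /
        ((mn.1.factorial : ℝ) * (mn.2.factorial : ℝ) * ‖poch b mn.1‖ * ‖poch c mn.2‖)) *
        (1 - r) ^ (-(A + ((mn.1:ℝ) + (mn.2:ℝ))))) := by
    rintro ⟨m, n⟩
    have hbin := (hasSum_binomR (A + ((m:ℝ) + (n:ℝ))) habs_r).mul_left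
      (pochR A (m + n) * X ^ m * Y ^ n /
        ((m.factorial : ℝ) * (n.factorial : ℝ) * ‖poch b m‖ * ‖poch c n‖))
    have heq : (fun ℓ : ℕ => pochR A (m + n) * X ^ m * Y ^ n /
        ((m.factorial : ℝ) * (n.factorial : ℝ) * ‖poch b m‖ * ‖poch c n‖) *
        (pochR (A + ((m:ℝ) + (n:ℝ))) ℓ * r ^ ℓ / (ℓ.factorial : ℝ)))
        = fun ℓ => h ((m, n), ℓ) := by
      funext ℓ
      simp only [hh]
      have e := pochR_add A (m + n) ℓ
      rw [Nat.cast_add] at e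
      rw [show ℓ + (m + n) = (m + n) + ℓ from Nat.add_comm _ _, e]
      ring
    rw [heq] at hbin
    exact hbin
  have hsum_h : Summable h := by
    rw [summable_prod_of_nonneg hh_nonneg]
    refine ⟨fun mn => (hslice_h mn).summable, ?_⟩
    have hcongr : ∀ mn : ℕ × ℕ, ∑' ℓ, h (mn, ℓ) = (1 - r) ^ (-A) *
        (pochR A (mn.1 + mn.2) * (X * u) ^ mn.1 * (Y * u) ^ mn.2 /
          ((mn.1.factorial : ℝ) * (mn.2.factorial : ℝ) * ‖poch b mn.1‖ * ‖poch c mn.2‖)) := by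
      rintro ⟨m, n⟩
      rw [(hslice_h (m, n)).tsum_eq]
      simp only
      rw [show -(A + ((m:ℝ) + (n:ℝ))) = (-A) + (-(m:ℝ) + -(n:ℝ)) by ring,
        Real.rpow_add h1r, Real.rpow_add h1r,
        Real.rpow_neg h1r.le ((m:ℝ)), Real.rpow_neg h1r.le ((n:ℝ)),
        Real.rpow_natCast, Real.rpow_natCast]
      rw [hu]
      ring
    rw [funext hcongr]
    exact (psi2_real_summable hb hc (norm_nonneg a) (by positivity) (by positivity)).mul_left _
  have hsumF : Summable F :=
    Summable.of_norm (Summable.of_nonneg_of_le (fun p => norm_nonneg _) hnormF hsum_h)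
  set S : ℂ := ∑' p, F p with hS
  have hFS : HasSum F S := hsumF.hasSum
  -- fiberwise over ℓ
  have hfiber_ℓ : ∀ ℓ : ℕ, HasSum (fun mn : ℕ × ℕ => F (mn, ℓ))
      (poch a ℓ / (ℓ.factorial : ℂ) * psi2 (a + ℓ) b c x y * χ ^ ℓ) := by
    intro ℓ
    set c0 : ℂ := poch a ℓ * χ ^ ℓ / (ℓ.factorial : ℂ) with hc0
    set g : ℕ × ℕ → ℂ := fun p => poch (a + ℓ) (p.1 + p.2) * x ^ p.1 * y ^ p.2 /
      ((p.1.factorial : ℂ) * (p.2.factorial : ℂ) * poch b p.1 * poch c p.2) with hg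
    have hEq : ∀ mn : ℕ × ℕ, F (mn, ℓ) = c0 * g mn := by
      rintro ⟨m, n⟩
      simp only [hF, hg, hc0]
      rw [poch_add a ℓ (m + n)]
      ring
    have hslice : Summable (fun mn : ℕ × ℕ => F (mn, ℓ)) :=
      hsumF.comp_injective (i := fun mn : ℕ × ℕ => (mn, ℓ))
        (fun p q hpq => (Prod.ext_iff.mp hpq).1)
    by_cases hz : c0 = 0
    · have hzero : ∀ mn : ℕ × ℕ, F (mn, ℓ) = 0 := fun mn => by rw [hEq mn, hz, zero_mul]
      have : poch a ℓ / (ℓ.factorial : ℂ) * psi2 (a + ℓ) b c x y * χ ^ ℓ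
          = c0 * psi2 (a + ℓ) b c x y := by rw [hc0]; ring
      rw [this, hz, zero_mul]
      exact (funext hzero : (fun mn : ℕ × ℕ => F (mn, ℓ)) = fun _ => 0) ▸ hasSum_zero
    · have hsg : Summable g := by
        have h1 : Summable (fun mn : ℕ × ℕ => c0 * g mn) :=
          (funext hEq : (fun mn : ℕ × ℕ => F (mn, ℓ)) = fun mn => c0 * g mn) ▸ hslice
        have h2 := h1.mul_left c0⁻¹
        refine h2.congr fun mn => ?_
        field_simp
      have hpsig : HasSum g (psi2 (a + ℓ) b c x y) := by
        have : psi2 (a + ℓ) b c x y = ∑' p, g p := by rw [psi2, hg]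
        rw [this]
        exact hsg.hasSum
      have := hpsig.mul_left c0
      have hval : c0 * psi2 (a + ℓ) b c x y
          = poch a ℓ / (ℓ.factorial : ℂ) * psi2 (a + ℓ) b c x y * χ ^ ℓ := by
        rw [hc0]; ring
      rw [hval] at this
      exact this.congr_fun fun mn => hEq mn
  -- regroup to get the LHS sum
  have hmain : HasSum (fun ℓ : ℕ => poch a ℓ / (ℓ.factorial : ℂ) *
      psi2 (a + ℓ) b c x y * χ ^ ℓ) S := by
    have hFcomm : HasSum (fun q : ℕ × (ℕ × ℕ) => F (q.2, q.1)) S := by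
      have := (Equiv.prodComm (ℕ × ℕ) ℕ).hasSum_iff
        (f := fun q : ℕ × (ℕ × ℕ) => F (q.2, q.1)) (a := S)
      exact this.mp (by exact hFS)
    exact hFcomm.prod_fiberwise fun ℓ => hfiber_ℓ ℓ
  -- fiberwise over (m, n) to identify S with the RHS
  have hfiber_mn : ∀ mn : ℕ × ℕ, HasSum (fun ℓ : ℕ => F (mn, ℓ))
      (poch a (mn.1 + mn.2) * x ^ mn.1 * y ^ mn.2 /
        ((mn.1.factorial : ℂ) * (mn.2.factorial : ℂ) * poch b mn.1 * poch c mn.2) *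
        (1 - χ) ^ (-(a + mn.1 + mn.2))) := by
    rintro ⟨m, n⟩
    have hbin := (hasSum_binom (a + m + n) hχ).mul_left
      (poch a (m + n) * x ^ m * y ^ n /
        ((m.factorial : ℂ) * (n.factorial : ℂ) * poch b m * poch c n))
    refine hbin.congr_fun fun ℓ => ?_
    simp only [hF]
    rw [show ℓ + (m + n) = (m + n) + ℓ from Nat.add_comm _ _, poch_add a (m + n) ℓ,
      Nat.cast_add, ← add_assoc]
    ring
  have hU : HasSum (fun mn : ℕ × ℕ =>
      poch a (mn.1 + mn.2) * x ^ mn.1 * y ^ mn.2 /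
        ((mn.1.factorial : ℂ) * (mn.2.factorial : ℂ) * poch b mn.1 * poch c mn.2) *
        (1 - χ) ^ (-(a + mn.1 + mn.2))) S :=
    hFS.prod_fiberwise hfiber_mn
  have hRHS : (1 - χ) ^ (-a) * psi2 a b c (x / (1 - χ)) (y / (1 - χ)) = S := by
    rw [psi2, ← tsum_mul_left]
    rw [← hU.tsum_eq]
    refine tsum_congr fun mn => ?_
    obtain ⟨m, n⟩ := mn
    simp only
    have hcpow : (1 - χ) ^ (-(a + (m:ℂ) + (n:ℂ))) =
        (1 - χ) ^ (-a) * ((1 - χ) ^ m)⁻¹ * ((1 - χ) ^ n)⁻¹ := by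
      rw [show -(a + (m:ℂ) + (n:ℂ)) = -a + (-(m:ℂ) + -(n:ℂ)) by ring,
        Complex.cpow_add _ _ h1χ, Complex.cpow_add _ _ h1χ, ← mul_assoc,
        Complex.cpow_neg (1 - χ) ((m : ℕ) : ℂ), Complex.cpow_neg (1 - χ) ((n : ℕ) : ℂ),
        Complex.cpow_natCast, Complex.cpow_natCast]
    rw [hcpow, div_pow, div_pow]
    have hm : ((1 - χ) ^ m : ℂ) ≠ 0 := pow_ne_zero _ h1χ
    have hn : ((1 - χ) ^ n : ℂ) ≠ 0 := pow_ne_zero _ h1χ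
    field_simp
  rw [hRHS]
  exact hmain
end
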